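/- arXiv:2201.04121 — 12 statements merged into one kernel-verified Lean document; each statement's English description precedes it below -/
import Mathlib

section
/- For d ≥ 1, if (p, q, r) ∈ ℝ × ℝ × ℝ^d satisfies p < 0, r_i > 0 for all i, and q > p·∑_i log(-r_i/p) + p·d, then ω̄ := d·ω((1/d)(1 + d - q/p + ∑_i log(-r_i/p)) - log d) > 1, where ω is the Wright omega function on the reals, i.e., the inverse of x ↦ x + log x on (0, ∞). -/
/-
Since x ↦ x + log x is strictly increasing on (0, ∞), ω(β) > c for every c > 0 with
c + log c < β. Take c = 1/d: the hypothesis on q says exactly that the argument of ω exceeds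
1/d - log d = c + log c, so ω(…) > 1/d.
-/

open Real

lemma strictMonoOn_add_log : StrictMonoOn (fun x : ℝ => x + log x) (Set.Ioi 0) :=
  fun _ hx _ _ hxy => add_lt_add hxy (log_lt_log hx hxy)

lemma lt_of_add_log_lt {c y : ℝ} (hc : 0 < c) (hy : 0 < y) (h : c + log c < y + log y) :
    c < y :=
  (strictMonoOn_add_log.lt_iff_lt hc hy).mp h

theorem stmt_0_general (d : ℕ) (hd : 1 ≤ d) (ω : ℝ → ℝ)
    (hωpos : ∀ β : ℝ, 0 < ω β)
    (hωeq : ∀ β : ℝ, ω β + Real.log (ω β) = β)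
    (p q : ℝ) (r : Fin d → ℝ)
    (hp : p < 0)
    (hq : p * ∑ i, Real.log (-(r i) / p) + p * d < q) :
    1 < (d : ℝ) * ω ((1 / d) * (1 + d - q / p + ∑ i, Real.log (-(r i) / p)) - Real.log d) := by
  have hd0 : (0 : ℝ) < d := by exact_mod_cast hd
  set S := ∑ i, Real.log (-(r i) / p)
  set β := (1 / d) * (1 + d - q / p + S) - Real.log d with hβ_def
  have hqp : q / p < S + d := by
    rw [div_lt_iff_of_neg hp]
    linarith
  have hβ : 1 / (d : ℝ) + log (1 / d) < β := by
    have : (1 : ℝ) / d * 1 < 1 / d * (1 + d - q / p + S) :=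
      mul_lt_mul_of_pos_left (by linarith) (by positivity)
    rw [hβ_def, log_div one_ne_zero hd0.ne', log_one]
    linarith
  have hω : 1 / (d : ℝ) < ω β :=
    lt_of_add_log_lt (by positivity) (hωpos β) (by rwa [hωeq β])
  calc (1 : ℝ) = d * (1 / d) := by field_simp
    _ < d * ω β := mul_lt_mul_of_pos_left hω hd0

theorem stmt_0 (d : ℕ) (hd : 1 ≤ d) (ω : ℝ → ℝ)
    (hωpos : ∀ β : ℝ, 0 < ω β)
    (hωeq : ∀ β : ℝ, ω β + Real.log (ω β) = β)
    (p q : ℝ) (r : Fin d → ℝ)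
    (hp : p < 0) (hr : ∀ i, 0 < r i)
    (hq : p * ∑ i, Real.log (-(r i) / p) + p * d < q) :
    1 < (d : ℝ) * ω ((1 / d) * (1 + d - q / p + ∑ i, Real.log (-(r i) / p)) - Real.log d) :=
  stmt_0_general d hd ω hωpos hωeq p q r hp hq
end

section
/- Let d ≥ 1, α ∈ ℝ^d with α_i > 0 and ∑_i α_i = 1, and let φ(w) = ∏_i w_i^{α_i}. If p < 0, r ∈ ℝ_{++}^d and -p < φ(r/α) (i.e., (p,r) is interior to the dual hypograph power cone), then the function h(y) = ∑_i α_i log(y - p α_i) - log(φ(r)), defined for y > max_i p α_i, is strictly increasing, strictly concave, and has a unique root ŷ, and ŷ > 0. -/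
/-! Each summand `α i * log (y - p * α i)` is strictly increasing and strictly concave, hence so
is `h`. The cone condition `-p < ∏ (r i / α i) ^ α i` is, after taking logarithms and using
`∑ α i = 1`, exactly `h 0 < 0`, while `h y ≥ log y - log φ(r)` for `y > 0`; the intermediate value
theorem gives a root in `(0, φ(r)]`, unique by strict monotonicity. -/

open Real Set Finset

theorem Finset.strictMonoOn_sum {ι β M : Type*} [Preorder β] [AddCommMonoid M] [PartialOrder M]
    [IsOrderedCancelAddMonoid M] {s : Set β} {f : ι → β → M} {t : Finset ι} (ht : t.Nonempty)
    (hf : ∀ i ∈ t, StrictMonoOn (f i) s) : StrictMonoOn (fun x => ∑ i ∈ t, f i x) s :=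
  fun _ hx _ hy hxy => sum_lt_sum_of_nonempty ht fun i hi => hf i hi hx hy hxy

theorem Finset.strictConcaveOn_sum {ι E : Type*} [AddCommGroup E] [Module ℝ E] {s : Set E}
    {f : ι → E → ℝ} {t : Finset ι} (ht : t.Nonempty) (hf : ∀ i ∈ t, StrictConcaveOn ℝ s (f i)) :
    StrictConcaveOn ℝ s (fun x => ∑ i ∈ t, f i x) := by
  obtain ⟨i₀, hi₀⟩ := ht
  refine ⟨(hf i₀ hi₀).1, fun x hx y hy hxy a b ha hb hab => ?_⟩
  simp only [smul_eq_mul, mul_sum, ← sum_add_distrib]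
  exact sum_lt_sum_of_nonempty ⟨i₀, hi₀⟩ fun i hi => (hf i hi).2 hx hy hxy ha hb hab

namespace Real

theorem strictMonoOn_mul_log_sub {w : ℝ} (hw : 0 < w) (c : ℝ) :
    StrictMonoOn (fun y => w * log (y - c)) (Ioi c) :=
  fun _ hx _ _ hxy => mul_lt_mul_of_pos_left (log_lt_log (sub_pos.2 hx) (by linarith)) hw

theorem strictConcaveOn_mul_log_sub {w : ℝ} (hw : 0 < w) (c : ℝ) :
    StrictConcaveOn ℝ (Ioi c) (fun y => w * log (y - c)) := by
  refine ⟨convex_Ioi c, fun x hx y hy hxy a b ha hb hab => ?_⟩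
  have hlog := strictConcaveOn_log_Ioi.2 (mem_Ioi.2 (sub_pos.2 hx)) (mem_Ioi.2 (sub_pos.2 hy))
    (sub_left_injective.ne hxy) ha hb hab
  have hcombo : a • (x - c) + b • (y - c) = a • x + b • y - c := by
    simp only [smul_eq_mul]; linear_combination (-c) * hab
  rw [hcombo] at hlog
  simp only [smul_eq_mul] at hlog ⊢
  calc a * (w * log (x - c)) + b * (w * log (y - c))
      = w * (a * log (x - c) + b * log (y - c)) := by ring
    _ < w * log (a * x + b * y - c) := mul_lt_mul_of_pos_left hlog hw

section WeightedLogSum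

variable {ι : Type*} [Fintype ι] {w c : ι → ℝ}

theorem strictMonoOn_sum_mul_log_sub [Nonempty ι] (hw : ∀ i, 0 < w i) :
    StrictMonoOn (fun y => ∑ i, w i * log (y - c i)) {y | ∀ i, c i < y} :=
  strictMonoOn_sum univ_nonempty fun i _ =>
    (strictMonoOn_mul_log_sub (hw i) (c i)).mono fun _ hy => hy i

theorem strictConcaveOn_sum_mul_log_sub [Nonempty ι] (hw : ∀ i, 0 < w i) :
    StrictConcaveOn ℝ {y | ∀ i, c i < y} (fun y => ∑ i, w i * log (y - c i)) := by
  have hconv : Convex ℝ {y : ℝ | ∀ i, c i < y} := fun _ hx _ hy _ _ ha hb hab i =>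
    convex_Ioi (c i) (hx i) (hy i) ha hb hab
  exact strictConcaveOn_sum univ_nonempty fun i _ =>
    (strictConcaveOn_mul_log_sub (hw i) (c i)).subset (fun _ hy => hy i) hconv

theorem continuousOn_sum_mul_log_sub :
    ContinuousOn (fun y => ∑ i, w i * log (y - c i)) {y | ∀ i, c i < y} :=
  continuousOn_finsetSum _ fun i _ => continuousOn_const.mul <|
    (continuousOn_id.sub continuousOn_const).log fun _ hy => (sub_pos.2 (hy i)).ne'

theorem log_le_sum_mul_log_sub (hw : ∀ i, 0 ≤ w i) (hsum : ∑ i, w i = 1) (hc : ∀ i, c i ≤ 0)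
    {y : ℝ} (hy : 0 < y) : log y ≤ ∑ i, w i * log (y - c i) :=
  calc log y = ∑ i, w i * log y := by rw [← sum_mul, hsum, one_mul]
    _ ≤ ∑ i, w i * log (y - c i) := sum_le_sum fun i _ =>
      mul_le_mul_of_nonneg_left (log_le_log hy (by linarith [hc i])) (hw i)

theorem exists_pos_sum_mul_log_sub_eq (hw : ∀ i, 0 ≤ w i) (hsum : ∑ i, w i = 1)
    (hc : ∀ i, c i < 0) {C : ℝ} (hC : ∑ i, w i * log (-c i) < C) :
    ∃ y, 0 < y ∧ ∑ i, w i * log (y - c i) = C := by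
  set g := fun y => ∑ i, w i * log (y - c i)
  have hg0 : g 0 < C := by simpa only [g, zero_sub] using hC
  have hgb : C ≤ g (exp C) := by
    simpa only [log_exp] using log_le_sum_mul_log_sub hw hsum (fun i => (hc i).le) (exp_pos C)
  have hcont : ContinuousOn g (Icc 0 (exp C)) :=
    continuousOn_sum_mul_log_sub.mono fun y hy i => (hc i).trans_le hy.1
  obtain ⟨y, hy, hgy⟩ := intermediate_value_Icc (exp_pos C).le hcont ⟨hg0.le, hgb⟩
  refine ⟨y, hy.1.lt_of_ne ?_, hgy⟩
  rintro rfl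
  exact hg0.ne hgy

end WeightedLogSum

theorem sum_mul_log_neg_mul_lt_log_prod_rpow {ι : Type*} [Fintype ι] {α r : ι → ℝ} {p : ℝ}
    (hα : ∀ i, 0 < α i) (hαsum : ∑ i, α i = 1) (hp : p < 0) (hr : ∀ i, 0 < r i)
    (hdual : -p < ∏ i, (r i / α i) ^ α i) :
    ∑ i, α i * log (-(p * α i)) < log (∏ i, r i ^ α i) := by
  have log_prod_rpow : ∀ x : ι → ℝ, (∀ i, 0 < x i) →
      log (∏ i, x i ^ α i) = ∑ i, α i * log (x i) := fun x hx => by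
    rw [log_prod fun i _ => (rpow_pos_of_pos (hx i) _).ne']
    exact sum_congr rfl fun i _ => log_rpow (hx i) _
  have hsplit : ∑ i, α i * log (-(p * α i)) = log (-p) + ∑ i, α i * log (α i) := by
    simp only [← neg_mul, log_mul (neg_pos.2 hp).ne' (hα _).ne', mul_add, sum_add_distrib,
      ← sum_mul, hαsum, one_mul]
  have hlog := log_lt_log (neg_pos.2 hp) hdual
  rw [log_prod_rpow _ fun i => div_pos (hr i) (hα i)] at hlog
  simp only [log_div (hr _).ne' (hα _).ne', mul_sub, sum_sub_distrib] at hlog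
  rw [hsplit, log_prod_rpow r hr]
  linarith

end Real

theorem stmt_1 (d : ℕ) (hd : 1 ≤ d) (α : Fin d → ℝ)
    (hα : ∀ i, 0 < α i) (hαsum : ∑ i, α i = 1)
    (p : ℝ) (r : Fin d → ℝ) (hp : p < 0) (hr : ∀ i, 0 < r i)
    (hdual : -p < ∏ i, (r i / α i) ^ (α i)) :
    StrictMonoOn (fun y => ∑ i, α i * Real.log (y - p * α i) - Real.log (∏ i, (r i) ^ (α i)))
      {y : ℝ | ∀ i, p * α i < y} ∧
    StrictConcaveOn ℝ {y : ℝ | ∀ i, p * α i < y}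
      (fun y => ∑ i, α i * Real.log (y - p * α i) - Real.log (∏ i, (r i) ^ (α i))) ∧
    ∃ yhat : ℝ, (∀ i, p * α i < yhat) ∧ 0 < yhat ∧
      (∑ i, α i * Real.log (yhat - p * α i) - Real.log (∏ i, (r i) ^ (α i)) = 0) ∧
      ∀ y : ℝ, (∀ i, p * α i < y) →
        (∑ i, α i * Real.log (y - p * α i) - Real.log (∏ i, (r i) ^ (α i)) = 0) → y = yhat := by
  have : Nonempty (Fin d) := ⟨⟨0, hd⟩⟩
  have hpα : ∀ i, p * α i < 0 := fun i => mul_neg_of_neg_of_pos hp (hα i)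
  have hmono : StrictMonoOn (fun y => ∑ i, α i * log (y - p * α i) - log (∏ i, r i ^ α i))
      {y : ℝ | ∀ i, p * α i < y} := fun _ hx _ hy hxy =>
    sub_lt_sub_right (strictMonoOn_sum_mul_log_sub hα hx hy hxy) _
  have hconc : StrictConcaveOn ℝ {y : ℝ | ∀ i, p * α i < y}
      (fun y => ∑ i, α i * log (y - p * α i) - log (∏ i, r i ^ α i)) := by
    simpa only [Pi.add_def, ← sub_eq_add_neg] using
      (strictConcaveOn_sum_mul_log_sub hα).add_const (-log (∏ i, r i ^ α i))
  obtain ⟨yhat, hyhat, hroot⟩ := exists_pos_sum_mul_log_sub_eq (fun i => (hα i).le) hαsum hpα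
    (sum_mul_log_neg_mul_lt_log_prod_rpow hα hαsum hp hr hdual)
  have hyhatS : ∀ i, p * α i < yhat := fun i => (hpα i).trans hyhat
  exact ⟨hmono, hconc, yhat, hyhatS, hyhat, sub_eq_zero.2 hroot, fun y hy hy0 =>
    hmono.injOn hy hyhatS (hy0.trans (sub_eq_zero.2 hroot).symm)⟩
end

section
/- Let d ≥ 1, φ(w) = ∏_i w_i^{1/d} the geometric mean, and f(u,w) = -log(φ(w) - u) - ∑_i log(w_i) the barrier of the hypograph geometric mean cone, with gradient g. For p < 0 and r ∈ ℝ_{++}^d with -p < d·φ(r), define g*_p = -1/p - (φ(r) + p/d)^{-1} and g*_{r_i} = -φ(r)/(r_i(φ(r) + p/d)). Then -g(-g*_p, -g*_r) = (p, r); in particular g_u(u,w) = 1/(φ(w)-u) evaluated at (u,w) = (-g*_p, -g*_r) equals -p. -/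
theorem stmt_2 (d : ℕ) (hd : 1 ≤ d) (p : ℝ) (r : Fin d → ℝ)
    (hp : p < 0) (hr : ∀ i, 0 < r i)
    (hdual : -p < d * ∏ i, (r i) ^ ((1 : ℝ) / d)) :
    let φr := ∏ i, (r i) ^ ((1 : ℝ) / d)
    let gp := -1 / p - (φr + p / d)⁻¹
    let gr : Fin d → ℝ := fun i => -φr / (r i * (φr + p / d))
    let u := -gp
    let w : Fin d → ℝ := fun i => -gr i
    let φw := ∏ i, (w i) ^ ((1 : ℝ) / d)
    (-(1 / (φw - u)) = p) ∧
    ∀ i, -(-φw / (d * w i * (φw - u)) - 1 / (w i)) = r i := by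
  intro φr gp gr u w φw
  have hD : (0:ℝ) < d := by exact_mod_cast Nat.lt_of_lt_of_le Nat.zero_lt_one hd
  have hφ : 0 < φr := Finset.prod_pos fun i _ => Real.rpow_pos_of_pos (hr i) _
  have hs : 0 < φr + p / d := by
    have h1 : φr + p / d = (φr * d + p) / d := by field_simp
    rw [h1]
    apply div_pos _ hD
    nlinarith
  set s := φr + p / d with hs_def
  have hwi : ∀ i, w i = φr / (r i * s) := by
    intro i
    show -(-φr / (r i * s)) = φr / (r i * s)
    rw [neg_div, neg_neg]
  have hwpos : ∀ i, 0 < w i := by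
    intro i; rw [hwi i]; exact div_pos hφ (mul_pos (hr i) hs)
  have hpow : ∀ x : ℝ, 0 < x → (x ^ ((1:ℝ)/d)) ^ (d:ℕ) = x := by
    intro x hx
    rw [← Real.rpow_natCast (x ^ ((1:ℝ)/d)) d, ← Real.rpow_mul hx.le,
      one_div_mul_cancel (ne_of_gt hD), Real.rpow_one]
  have hφw : φw = 1 / s := by
    show ∏ i, (w i) ^ ((1:ℝ)/d) = 1 / s
    have : ∀ i, (w i) ^ ((1:ℝ)/d) = φr ^ ((1:ℝ)/d) / ((r i) ^ ((1:ℝ)/d) * s ^ ((1:ℝ)/d)) := by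
      intro i
      rw [hwi i, Real.div_rpow hφ.le (mul_pos (hr i) hs).le,
        Real.mul_rpow (hr i).le hs.le]
    rw [Finset.prod_congr rfl fun i _ => this i, Finset.prod_div_distrib,
      Finset.prod_mul_distrib, Finset.prod_const, Finset.prod_const,
      Finset.card_fin, hpow _ hφ, hpow _ hs]
    field_simp
    exact div_self (ne_of_gt hφ)

  have hu : u = 1 / p + 1 / s := by
    show -((-1)/p - s⁻¹) = 1 / p + 1 / s
    field_simp
    ring
  have hφwu : φw - u = -1 / p := by
    rw [hφw, hu]; try ring
  constructor
  · rw [hφwu]; field_simp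
  · intro i
    rw [hφwu, hφw, hwi i]
    have hri := hr i
    have hp' : p ≠ 0 := ne_of_lt hp
    have hs' : s ≠ 0 := ne_of_gt hs
    have hφ' : φr ≠ 0 := ne_of_gt hφ
    field_simp
    have hds : (d:ℝ) * s = d * φr + p := by rw [hs_def]; field_simp
    have hdinv : (d:ℝ) * (d:ℝ)⁻¹ = 1 := mul_inv_cancel₀ (ne_of_gt hD)
    linear_combination (r i * s * φr) * hds + (p - p * φr ^ 2 * r i - p ^ 2 * φr * r i * (d:ℝ)⁻¹) * hdinv
end

section
/- Let d ≥ 1, p ∈ ℝ, r ∈ ℝ^d with p > ∑_i |r_i| (interior of the epigraph of the ℓ1 norm), r ≠ 0. Then h(y) = p y + ∑_i √(1 + r_i² y²) + 1 is strictly convex on ℝ, strictly increasing on (-∞, 0], satisfies h'(y) ≥ p - ∑_i |r_i| > 0 for y ≤ 0, and has a unique root ŷ on (-∞, 0]; moreover ŷ ≤ max{-(p - ∑_i |r_i|)^{-1}, -(d+1)/p}. -/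
/-!
Each summand of `h' = p + ∑ rᵢ² y / √(1 + rᵢ² y²)` has absolute value at most `|rᵢ|`, so
`h' ≥ p - ‖r‖₁ > 0` on all of `ℝ`, and `h'' = ∑ rᵢ² (1 + rᵢ² y²)^(-3/2) > 0` as soon as `r ≠ 0`.
The root is bracketed by `1 ≤ √(1 + c² y²) ≤ 1 + |c| |y|`: the two resulting affine bounds on `h`
vanish at `-(d+1)/(p - ‖r‖₁)` and at `-(d+1)/p`, so `ŷ` lies between these points.
-/

open Finset Real

section SqrtOneAddSqMulSq

variable (c y : ℝ)

lemma hasDerivAt_sqrt_one_add_sq_mul_sq :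
    HasDerivAt (fun y => √(1 + c ^ 2 * y ^ 2)) (c ^ 2 * y / √(1 + c ^ 2 * y ^ 2)) y := by
  have hpos : 0 < 1 + c ^ 2 * y ^ 2 := by positivity
  convert (((hasDerivAt_pow 2 y).const_mul (c ^ 2)).const_add 1).sqrt hpos.ne' using 1
  field_simp
  ring

lemma hasDerivAt_sq_mul_div_sqrt_one_add_sq_mul_sq :
    HasDerivAt (fun y => c ^ 2 * y / √(1 + c ^ 2 * y ^ 2))
      (c ^ 2 / ((1 + c ^ 2 * y ^ 2) * √(1 + c ^ 2 * y ^ 2))) y := by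
  have hpos : 0 < 1 + c ^ 2 * y ^ 2 := by positivity
  have hlin : HasDerivAt (fun y => c ^ 2 * y) (c ^ 2) y := by
    simpa using (hasDerivAt_id y).const_mul (c ^ 2)
  refine (hlin.div (hasDerivAt_sqrt_one_add_sq_mul_sq c y) (sqrt_pos.mpr hpos).ne').congr_deriv ?_
  have hsq := sq_sqrt hpos.le
  field_simp
  linear_combination (c ^ 2 * (1 + c ^ 2 * y ^ 2) - c ^ 2) * hsq

lemma abs_sq_mul_div_sqrt_one_add_sq_mul_sq_le :
    |c ^ 2 * y / √(1 + c ^ 2 * y ^ 2)| ≤ |c| := by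
  have hpos : 0 < √(1 + c ^ 2 * y ^ 2) := sqrt_pos.mpr (by positivity)
  have hcy : |c * y| ≤ √(1 + c ^ 2 * y ^ 2) := abs_le_sqrt (by nlinarith)
  rw [abs_div, abs_of_pos hpos, div_le_iff₀ hpos, show c ^ 2 * y = c * (c * y) by ring, abs_mul]
  exact mul_le_mul_of_nonneg_left hcy (abs_nonneg c)

lemma sqrt_one_add_sq_mul_sq_le : √(1 + c ^ 2 * y ^ 2) ≤ 1 + |c| * |y| := by
  rw [sqrt_le_left (by positivity)]
  nlinarith [sq_abs c, sq_abs y, abs_nonneg c, abs_nonneg y]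

lemma one_le_sqrt_one_add_sq_mul_sq : 1 ≤ √(1 + c ^ 2 * y ^ 2) :=
  one_le_sqrt.mpr (le_add_of_nonneg_right (by positivity))

end SqrtOneAddSqMulSq

noncomputable def rootFn {ι : Type*} [Fintype ι] (p : ℝ) (r : ι → ℝ) (y : ℝ) : ℝ :=
  p * y + ∑ i, √(1 + r i ^ 2 * y ^ 2) + 1

section RootFn

variable {ι : Type*} [Fintype ι] (p : ℝ) (r : ι → ℝ)

lemma hasDerivAt_rootFn (y : ℝ) :
    HasDerivAt (rootFn p r) (p + ∑ i, r i ^ 2 * y / √(1 + r i ^ 2 * y ^ 2)) y := by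
  have hlin : HasDerivAt (fun y => p * y) p y := by simpa using (hasDerivAt_id y).const_mul p
  exact ((hlin.add (HasDerivAt.fun_sum fun i _ =>
    hasDerivAt_sqrt_one_add_sq_mul_sq (r i) y)).add_const 1)

lemma hasDerivAt_deriv_rootFn (y : ℝ) :
    HasDerivAt (deriv (rootFn p r))
      (∑ i, r i ^ 2 / ((1 + r i ^ 2 * y ^ 2) * √(1 + r i ^ 2 * y ^ 2))) y := by
  rw [show deriv (rootFn p r) = _ from funext fun y => (hasDerivAt_rootFn p r y).deriv]
  exact (HasDerivAt.fun_sum fun i _ =>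
    hasDerivAt_sq_mul_div_sqrt_one_add_sq_mul_sq (r i) y).const_add p

lemma continuous_rootFn : Continuous (rootFn p r) :=
  continuous_iff_continuousAt.mpr fun y => (hasDerivAt_rootFn p r y).continuousAt

theorem strictConvexOn_rootFn (hr : r ≠ 0) : StrictConvexOn ℝ Set.univ (rootFn p r) := by
  obtain ⟨i₀, hi₀⟩ := Function.ne_iff.mp hr
  refine strictConvexOn_univ_of_deriv2_pos (continuous_rootFn p r) fun y => ?_
  rw [Function.iterate_succ_apply, Function.iterate_one, (hasDerivAt_deriv_rootFn p r y).deriv]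
  have : 0 < r i₀ ^ 2 := sq_pos_of_ne_zero hi₀
  exact sum_pos' (fun i _ => by positivity) ⟨i₀, mem_univ _, by positivity⟩

lemma sub_sum_abs_le_deriv_rootFn (y : ℝ) : p - ∑ i, |r i| ≤ deriv (rootFn p r) y := by
  rw [(hasDerivAt_rootFn p r y).deriv, sub_eq_add_neg, ← sum_neg_distrib]
  gcongr with i
  exact (abs_le.mp (abs_sq_mul_div_sqrt_one_add_sq_mul_sq_le (r i) y)).1

theorem strictMono_rootFn (hp : ∑ i, |r i| < p) : StrictMono (rootFn p r) :=
  strictMono_of_deriv_pos fun y => by linarith [sub_sum_abs_le_deriv_rootFn p r y]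

lemma add_card_add_one_le_rootFn (y : ℝ) : p * y + Fintype.card ι + 1 ≤ rootFn p r y := by
  have := sum_le_sum fun i (_ : i ∈ univ) => one_le_sqrt_one_add_sq_mul_sq (r i) y
  simp only [sum_const, card_univ, nsmul_eq_mul, mul_one] at this
  unfold rootFn
  linarith

lemma rootFn_le_add_card_add_one_add (y : ℝ) :
    rootFn p r y ≤ p * y + Fintype.card ι + 1 + (∑ i, |r i|) * |y| := by
  have := sum_le_sum fun i (_ : i ∈ univ) => sqrt_one_add_sq_mul_sq_le (r i) y
  rw [sum_add_distrib, ← sum_mul] at this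
  simp only [sum_const, card_univ, nsmul_eq_mul, mul_one] at this
  unfold rootFn
  linarith

theorem exists_rootFn_eq_zero (hp : ∑ i, |r i| < p) :
    ∃ y ∈ Set.Icc (-(Fintype.card ι + 1) / (p - ∑ i, |r i|)) (-(Fintype.card ι + 1) / p),
      rootFn p r y = 0 := by
  set S := ∑ i, |r i|
  set n : ℝ := Fintype.card ι + 1
  have hS : 0 ≤ S := sum_nonneg fun i _ => abs_nonneg (r i)
  have hn : 0 < n := by positivity
  have hpS : 0 < p - S := by linarith
  have hlo : -n / (p - S) ≤ -n / p := by
    rw [neg_div, neg_div, neg_le_neg_iff]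
    exact div_le_div_of_nonneg_left hn.le hpS (by linarith)
  refine intermediate_value_Icc hlo (continuous_rootFn p r).continuousOn ⟨?_, ?_⟩
  · have hy : -n / (p - S) ≤ 0 := div_nonpos_of_nonpos_of_nonneg (by linarith) hpS.le
    have := rootFn_le_add_card_add_one_add p r (-n / (p - S))
    rw [abs_of_nonpos hy] at this
    have hval : p * (-n / (p - S)) + n + S * -(-n / (p - S)) = 0 := by
      field_simp
      ring
    linarith
  · have := add_card_add_one_le_rootFn p r (-n / p)
    rw [mul_div_cancel₀ _ (by linarith : p ≠ 0)] at this
    linarith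

end RootFn

theorem stmt_4_general (d : ℕ) (p : ℝ) (r : Fin d → ℝ)
    (hp : ∑ i, |r i| < p) (hr : r ≠ 0) :
    let h : ℝ → ℝ := fun y => p * y + ∑ i, Real.sqrt (1 + (r i) ^ 2 * y ^ 2) + 1
    StrictConvexOn ℝ Set.univ h ∧
    StrictMonoOn h (Set.Iic 0) ∧
    (∀ y ≤ (0 : ℝ),
      p - ∑ i, |r i| ≤ p + y * ∑ i, (r i) ^ 2 / Real.sqrt (1 + (r i) ^ 2 * y ^ 2)) ∧
    (0 < p - ∑ i, |r i|) ∧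
    ∃ yhat : ℝ, (yhat ≤ 0 ∧ h yhat = 0 ∧
        yhat ≤ max (-(p - ∑ i, |r i|)⁻¹) (-(d + 1) / p)) ∧
      ∀ z ≤ (0 : ℝ), h z = 0 → z = yhat := by
  intro h
  change StrictConvexOn ℝ Set.univ (rootFn p r) ∧ StrictMonoOn (rootFn p r) (Set.Iic 0) ∧ _ ∧ _ ∧
    ∃ yhat, (yhat ≤ 0 ∧ rootFn p r yhat = 0 ∧ _) ∧ ∀ z ≤ 0, rootFn p r z = 0 → z = yhat
  have hmono := strictMono_rootFn p r hp
  have hp₀ : 0 < p := (sum_nonneg fun i _ => abs_nonneg (r i)).trans_lt hp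
  have hderiv (y : ℝ) :
      p - ∑ i, |r i| ≤ p + y * ∑ i, r i ^ 2 / √(1 + r i ^ 2 * y ^ 2) := by
    rw [mul_sum]
    convert sub_sum_abs_le_deriv_rootFn p r y using 1
    rw [(hasDerivAt_rootFn p r y).deriv]
    congr! 2 with i
    ring
  obtain ⟨yhat, ⟨-, hle⟩, hroot⟩ := exists_rootFn_eq_zero p r hp
  rw [Fintype.card_fin] at hle
  have hyhat : yhat ≤ 0 := hle.trans (div_nonpos_of_nonpos_of_nonneg (by linarith) hp₀.le)
  exact ⟨strictConvexOn_rootFn p r hr, hmono.strictMonoOn _, fun y _ => hderiv y, by linarith,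
    yhat, ⟨hyhat, hroot, hle.trans (le_max_right _ _)⟩,
    fun z _ hz => hmono.injective (hz.trans hroot.symm)⟩

theorem stmt_4 (d : ℕ) (hd : 1 ≤ d) (p : ℝ) (r : Fin d → ℝ)
    (hp : ∑ i, |r i| < p) (hr : r ≠ 0) :
    let h : ℝ → ℝ := fun y => p * y + ∑ i, Real.sqrt (1 + (r i) ^ 2 * y ^ 2) + 1
    StrictConvexOn ℝ Set.univ h ∧
    StrictMonoOn h (Set.Iic 0) ∧
    (∀ y ≤ (0 : ℝ),
      p - ∑ i, |r i| ≤ p + y * ∑ i, (r i) ^ 2 / Real.sqrt (1 + (r i) ^ 2 * y ^ 2)) ∧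
    (0 < p - ∑ i, |r i|) ∧
    ∃ yhat : ℝ, (yhat ≤ 0 ∧ h yhat = 0 ∧
        yhat ≤ max (-(p - ∑ i, |r i|)⁻¹) (-(d + 1) / p)) ∧
      ∀ z ≤ (0 : ℝ), h z = 0 → z = yhat :=
  stmt_4_general d p r hp hr
end

section
/- Let d ≥ 1, p > ∑_i |r_i|, r ∈ ℝ^d, and let ŷ < 0 satisfy p ŷ + ∑_i √(1 + r_i² ŷ²) + 1 = 0. Define g*_p = ŷ and g*_{r_i} = (√(1 + ŷ² r_i²) - 1)/r_i if r_i ≠ 0, and 0 otherwise. Then the point (u, w) := (-g*_p, -g*_r) lies in the interior of the infinity norm cone (u > max_i |w_i|), and the negative gradient of the barrier f(u,w) = -∑_i log(u² - w_i²) + (d-1) log u at (u,w) equals (p, r). -/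
/-!
Per coordinate, with `s = √(1 + ŷ² r²)`, rationalizing gives `-w = ŷ² r / (s + 1)`, and since
`s² - 1 = ŷ² r²` this turns `u² - w²` into `2 ŷ² / (s + 1)`. Every gradient entry is then an
explicit rational function of `s`, the `w`-entries collapse to `r`, and the `u`-entry collapses to
`-(1 + ∑ sᵢ) / ŷ`, which is `p` by the defining equation of `ŷ`.
-/

open Finset

section Coordinate

variable (y a : ℝ)

lemma sq_sqrt_one_add_sq_mul_sq : √(1 + y ^ 2 * a ^ 2) ^ 2 = 1 + y ^ 2 * a ^ 2 :=
  Real.sq_sqrt (by positivity)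

lemma ite_sqrt_sub_one_div_eq_mul_div :
    (if a = 0 then 0 else (√(1 + y ^ 2 * a ^ 2) - 1) / a) = y ^ 2 * a / (√(1 + y ^ 2 * a ^ 2) + 1) := by
  have hs := sq_sqrt_one_add_sq_mul_sq y a
  have hpos : 0 < √(1 + y ^ 2 * a ^ 2) + 1 := by positivity
  split_ifs with ha
  · simp [ha]
  · rw [div_eq_div_iff ha hpos.ne']
    linear_combination hs

lemma sq_sub_sq_mul_div_sqrt_add_one :
    y ^ 2 - (y ^ 2 * a / (√(1 + y ^ 2 * a ^ 2) + 1)) ^ 2 = 2 * y ^ 2 / (√(1 + y ^ 2 * a ^ 2) + 1) := by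
  have hs := sq_sqrt_one_add_sq_mul_sq y a
  have hpos : 0 < √(1 + y ^ 2 * a ^ 2) + 1 := by positivity
  field_simp
  linear_combination y ^ 2 * hs

variable {y}

lemma abs_mul_div_sqrt_add_one_lt (hy : y ≠ 0) :
    |y ^ 2 * a / (√(1 + y ^ 2 * a ^ 2) + 1)| < |y| := by
  have hs := sq_sqrt_one_add_sq_mul_sq y a
  have hpos : 0 < √(1 + y ^ 2 * a ^ 2) + 1 := by positivity
  have hya : |y * a| < √(1 + y ^ 2 * a ^ 2) + 1 := by
    nlinarith [sq_abs (y * a), abs_nonneg (y * a), Real.sqrt_nonneg (1 + y ^ 2 * a ^ 2)]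
  rw [abs_div, abs_of_pos hpos, div_lt_iff₀ hpos, show y ^ 2 * a = y * (y * a) by ring, abs_mul]
  exact mul_lt_mul_of_pos_left hya (abs_pos.mpr hy)

lemma two_mul_div_sq_sub_sq_eq (hy : y ≠ 0) :
    2 * (y ^ 2 * a / (√(1 + y ^ 2 * a ^ 2) + 1)) /
      (2 * y ^ 2 / (√(1 + y ^ 2 * a ^ 2) + 1)) = a := by
  have hpos : 0 < √(1 + y ^ 2 * a ^ 2) + 1 := by positivity
  field_simp

lemma two_neg_mul_div_sq_sub_sq_eq (hy : y ≠ 0) :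
    2 * -y / (2 * y ^ 2 / (√(1 + y ^ 2 * a ^ 2) + 1)) = -((√(1 + y ^ 2 * a ^ 2) + 1) / y) := by
  have hpos : 0 < √(1 + y ^ 2 * a ^ 2) + 1 := by positivity
  field_simp

end Coordinate

theorem stmt_5_general (d : ℕ) (p : ℝ) (r : Fin d → ℝ)
    (yhat : ℝ) (hy : yhat < 0)
    (hroot : p * yhat + ∑ i, Real.sqrt (1 + (r i) ^ 2 * yhat ^ 2) + 1 = 0) :
    let gr : Fin d → ℝ := fun i =>
      if r i = 0 then 0 else (Real.sqrt (1 + yhat ^ 2 * (r i) ^ 2) - 1) / r i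
    let u := -yhat
    let w : Fin d → ℝ := fun i => -gr i
    (∀ i, |w i| < u) ∧
    (-(((d : ℝ) - 1) / u - ∑ i, 2 * u / (u ^ 2 - (w i) ^ 2)) = p) ∧
    (∀ i, -(2 * w i / (u ^ 2 - (w i) ^ 2)) = r i) := by
  intro gr u w
  set s : Fin d → ℝ := fun i => √(1 + yhat ^ 2 * r i ^ 2) with hs
  have hw : ∀ i, w i = -(yhat ^ 2 * r i / (s i + 1)) := fun i =>
    congrArg Neg.neg (ite_sqrt_sub_one_div_eq_mul_div yhat (r i))
  have hgap : ∀ i, u ^ 2 - w i ^ 2 = 2 * yhat ^ 2 / (s i + 1) := fun i => by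
    rw [hw i, neg_sq, neg_sq]
    exact sq_sub_sq_mul_div_sqrt_add_one yhat (r i)
  refine ⟨fun i => ?_, ?_, fun i => ?_⟩
  · rw [hw i, abs_neg, show u = |yhat| from (abs_of_neg hy).symm]
    exact abs_mul_div_sqrt_add_one_lt (r i) hy.ne
  · have hterm : ∀ i, 2 * u / (u ^ 2 - w i ^ 2) = -((s i + 1) / yhat) := fun i => by
      rw [hgap i]
      exact two_neg_mul_div_sq_sub_sq_eq (r i) hy.ne
    have hroot' : p * yhat + ∑ i, s i + 1 = 0 := by
      simpa only [hs, mul_comm] using hroot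
    rw [sum_congr rfl fun i _ => hterm i, sum_neg_distrib, ← sum_div, sum_add_distrib]
    simp only [sum_const, card_univ, Fintype.card_fin, nsmul_eq_mul, mul_one, u]
    field_simp [hy.ne]
    linear_combination -hroot'
  · rw [hgap i, hw i, mul_neg, neg_div, neg_neg]
    exact two_mul_div_sq_sub_sq_eq (r i) hy.ne

theorem stmt_5 (d : ℕ) (hd : 1 ≤ d) (p : ℝ) (r : Fin d → ℝ)
    (hp : ∑ i, |r i| < p) (yhat : ℝ) (hy : yhat < 0)
    (hroot : p * yhat + ∑ i, Real.sqrt (1 + (r i) ^ 2 * yhat ^ 2) + 1 = 0) :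
    let gr : Fin d → ℝ := fun i =>
      if r i = 0 then 0 else (Real.sqrt (1 + yhat ^ 2 * (r i) ^ 2) - 1) / r i
    let u := -yhat
    let w : Fin d → ℝ := fun i => -gr i
    (∀ i, |w i| < u) ∧
    (-(((d : ℝ) - 1) / u - ∑ i, 2 * u / (u ^ 2 - (w i) ^ 2)) = p) ∧
    (∀ i, -(2 * w i / (u ^ 2 - (w i) ^ 2)) = r i) :=
  stmt_5_general d p r yhat hy hroot
end

section
/- Let d ≥ 1, α ∈ ℝ^d with α_i > 0 and ∑_i α_i = 1. For any y > 0 and p > 0, the function h'(y) = 2∑_i α_i²/(α_i y + (1+α_i)/p) - 2(y + 1/p)/(y(y + 2/p)) is strictly negative unless α is a vertex of the simplex, and in general h'(y) ≤ 0; i.e., 2∑_i α_i²/(α_i y + (1+α_i)/p) ≤ 2(y + 1/p)/(y(y + 2/p)). -/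
/-! Since `α i ≤ 1`, each term satisfies `α i ^ 2 / (α i * y + (1 + α i) / p) ≤ α i / (y + 2 / p)`,
strictly when `0 < α i < 1`: the two sides differ by a positive multiple of `α i * (1 - α i)`.
Summing over the simplex bounds the sum by its value `1 / (y + 2 / p)` at a vertex, which lies
below `(y + 1 / p) / (y * (y + 2 / p))` by `(1 / p) / (y * (y + 2 / p))`. -/

open Finset

section Term

variable {a y p : ℝ}

lemma mul_sub_sq_mul_eq (hp : 0 < p) :
    a * (a * y + (1 + a) / p) - a ^ 2 * (y + 2 / p) = a * (1 - a) / p := by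
  field_simp
  ring

lemma sq_div_le_div (ha₀ : 0 ≤ a) (ha₁ : a ≤ 1) (hy : 0 ≤ y) (hp : 0 < p) :
    a ^ 2 / (a * y + (1 + a) / p) ≤ a / (y + 2 / p) := by
  rw [div_le_div_iff₀ (by positivity) (by positivity)]
  have : 0 ≤ 1 - a := by linarith
  have : 0 ≤ a * (1 - a) / p := by positivity
  linarith [mul_sub_sq_mul_eq (a := a) (y := y) hp]

lemma sq_div_lt_div (ha₀ : 0 < a) (ha₁ : a < 1) (hy : 0 ≤ y) (hp : 0 < p) :
    a ^ 2 / (a * y + (1 + a) / p) < a / (y + 2 / p) := by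
  rw [div_lt_div_iff₀ (by positivity) (by positivity)]
  have : 0 < 1 - a := by linarith
  have : 0 < a * (1 - a) / p := by positivity
  linarith [mul_sub_sq_mul_eq (a := a) (y := y) hp]

end Term

section Simplex

variable {ι : Type*} [Fintype ι] {α : ι → ℝ} {y p : ℝ}

lemma le_one_of_sum_eq_one (hα : ∀ i, 0 ≤ α i) (hsum : ∑ i, α i = 1) (i : ι) : α i ≤ 1 :=
  hsum ▸ single_le_sum (fun j _ => hα j) (mem_univ i)

lemma sum_div_eq_of_sum_eq_one (hsum : ∑ i, α i = 1) (c : ℝ) :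
    ∑ i, α i / c = 1 / c := by
  rw [← sum_div, hsum]

lemma sum_sq_div_le (hα : ∀ i, 0 ≤ α i) (hsum : ∑ i, α i = 1) (hy : 0 ≤ y) (hp : 0 < p) :
    ∑ i, α i ^ 2 / (α i * y + (1 + α i) / p) ≤ 1 / (y + 2 / p) :=
  sum_div_eq_of_sum_eq_one hsum _ ▸ sum_le_sum fun i _ =>
    sq_div_le_div (hα i) (le_one_of_sum_eq_one hα hsum i) hy hp

lemma sum_sq_div_lt (hα : ∀ i, 0 < α i) (hsum : ∑ i, α i = 1) (hvert : ∀ i, α i ≠ 1)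
    (hy : 0 ≤ y) (hp : 0 < p) :
    ∑ i, α i ^ 2 / (α i * y + (1 + α i) / p) < 1 / (y + 2 / p) := by
  have hne : (univ : Finset ι).Nonempty :=
    nonempty_of_sum_ne_zero (hsum ▸ one_ne_zero)
  refine sum_div_eq_of_sum_eq_one hsum _ ▸ sum_lt_sum_of_nonempty hne fun i _ => ?_
  exact sq_div_lt_div (hα i)
    (lt_of_le_of_ne (le_one_of_sum_eq_one (fun j => (hα j).le) hsum i) (hvert i)) hy hp

end Simplex

lemma one_div_lt_div_mul {y p : ℝ} (hy : 0 < y) (hp : 0 < p) :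
    1 / (y + 2 / p) < (y + 1 / p) / (y * (y + 2 / p)) := by
  rw [div_lt_div_iff₀ (by positivity) (by positivity)]
  have : 0 < 1 / p * (y + 2 / p) := by positivity
  nlinarith

theorem stmt_6_general (d : ℕ) (α : Fin d → ℝ)
    (hα : ∀ i, 0 < α i) (hαsum : ∑ i, α i = 1)
    (y p : ℝ) (hy : 0 < y) (hp : 0 < p) :
    2 * ∑ i, (α i) ^ 2 / (α i * y + (1 + α i) / p) ≤ 2 * (y + 1 / p) / (y * (y + 2 / p)) ∧
    ((¬ ∃ i, α i = 1) →
      2 * ∑ i, (α i) ^ 2 / (α i * y + (1 + α i) / p) < 2 * (y + 1 / p) / (y * (y + 2 / p))) := by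
  have hgap := one_div_lt_div_mul hy hp
  rw [mul_div_assoc]
  refine ⟨?_, fun hvert => ?_⟩
  · linarith [sum_sq_div_le (fun i => (hα i).le) hαsum hy.le hp]
  · linarith [sum_sq_div_lt hα hαsum (not_exists.mp hvert) hy.le hp]

theorem stmt_6 (d : ℕ) (hd : 1 ≤ d) (α : Fin d → ℝ)
    (hα : ∀ i, 0 < α i) (hαsum : ∑ i, α i = 1)
    (y p : ℝ) (hy : 0 < y) (hp : 0 < p) :
    2 * ∑ i, (α i) ^ 2 / (α i * y + (1 + α i) / p) ≤ 2 * (y + 1 / p) / (y * (y + 2 / p)) ∧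
    ((¬ ∃ i, α i = 1) →
      2 * ∑ i, (α i) ^ 2 / (α i * y + (1 + α i) / p) < 2 * (y + 1 / p) / (y * (y + 2 / p))) :=
  stmt_6_general d α hα hαsum y p hy hp
end

section
/- Let d ≥ 1, α ∈ ℝ^d with α_i > 0 and ∑_i α_i = 1. For any y > 0 and p > 0, ∑_i α_i³/(α_i y + (1+α_i)/p)² ≤ 1/(y + 2/p)²; equivalently the second derivative h''(y) = -2∑_i α_i³/(α_i y + (1+α_i)/p)² + 2(y² + 2/p²)/(y²(y + 2/p)²) is strictly positive. -/
/-! Since `α_i ≤ 1`, the denominator satisfies `α_i y + (1 + α_i)/p ≥ α_i (y + 2/p)`, so the `i`-th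
term is at most `α_i / (y + 2/p)²`; summing over the simplex gives the bound. The second claim
follows because `1/(y + 2/p)²` is strictly smaller than `(y² + 2/p²)/(y² (y + 2/p)²)`. -/

open Finset

lemma cube_div_sq_le_div_sq {a y p : ℝ} (ha₀ : 0 ≤ a) (ha₁ : a ≤ 1) (hy : 0 ≤ y) (hp : 0 < p) :
    a ^ 3 / (a * y + (1 + a) / p) ^ 2 ≤ a / (y + 2 / p) ^ 2 := by
  rcases ha₀.eq_or_lt with rfl | ha
  · simp
  have hden : a * (y + 2 / p) ≤ a * y + (1 + a) / p := by
    rw [mul_add, mul_div_assoc', add_le_add_iff_left]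
    gcongr
    linarith
  calc a ^ 3 / (a * y + (1 + a) / p) ^ 2
      ≤ a ^ 3 / (a * (y + 2 / p)) ^ 2 := by gcongr
    _ = a / (y + 2 / p) ^ 2 := by field_simp

lemma sum_cube_div_sq_le {ι : Type*} (s : Finset ι) {α : ι → ℝ} (hα : ∀ i ∈ s, 0 ≤ α i)
    (hαsum : ∑ i ∈ s, α i = 1) {y p : ℝ} (hy : 0 ≤ y) (hp : 0 < p) :
    ∑ i ∈ s, α i ^ 3 / (α i * y + (1 + α i) / p) ^ 2 ≤ 1 / (y + 2 / p) ^ 2 := by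
  have hα₁ : ∀ i ∈ s, α i ≤ 1 := fun i hi => hαsum ▸ single_le_sum hα hi
  calc ∑ i ∈ s, α i ^ 3 / (α i * y + (1 + α i) / p) ^ 2
      ≤ ∑ i ∈ s, α i / (y + 2 / p) ^ 2 :=
        sum_le_sum fun i hi => cube_div_sq_le_div_sq (hα i hi) (hα₁ i hi) hy hp
    _ = 1 / (y + 2 / p) ^ 2 := by rw [← sum_div, hαsum]

lemma one_div_sq_lt {y p : ℝ} (hy : 0 < y) (hp : 0 < p) :
    1 / (y + 2 / p) ^ 2 < (y ^ 2 + 2 / p ^ 2) / (y ^ 2 * (y + 2 / p) ^ 2) := by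
  rw [div_lt_div_iff₀ (by positivity) (by positivity), one_mul]
  have : 0 < 2 / p ^ 2 * (y + 2 / p) ^ 2 := by positivity
  nlinarith

theorem stmt_7_general (d : ℕ) (α : Fin d → ℝ)
    (hα : ∀ i, 0 < α i) (hαsum : ∑ i, α i = 1)
    (y p : ℝ) (hy : 0 < y) (hp : 0 < p) :
    (∑ i, (α i) ^ 3 / (α i * y + (1 + α i) / p) ^ 2 ≤ 1 / (y + 2 / p) ^ 2) ∧
    0 < -2 * ∑ i, (α i) ^ 3 / (α i * y + (1 + α i) / p) ^ 2
        + 2 * (y ^ 2 + 2 / p ^ 2) / (y ^ 2 * (y + 2 / p) ^ 2) := by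
  have hsum := sum_cube_div_sq_le univ (fun i _ => (hα i).le) hαsum hy.le hp
  refine ⟨hsum, ?_⟩
  have hlt := one_div_sq_lt hy hp
  rw [mul_div_assoc]
  linarith

theorem stmt_7 (d : ℕ) (hd : 1 ≤ d) (α : Fin d → ℝ)
    (hα : ∀ i, 0 < α i) (hαsum : ∑ i, α i = 1)
    (y p : ℝ) (hy : 0 < y) (hp : 0 < p) :
    (∑ i, (α i) ^ 3 / (α i * y + (1 + α i) / p) ^ 2 ≤ 1 / (y + 2 / p) ^ 2) ∧
    0 < -2 * ∑ i, (α i) ^ 3 / (α i * y + (1 + α i) / p) ^ 2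
        + 2 * (y ^ 2 + 2 / p ^ 2) / (y ^ 2 * (y + 2 / p) ^ 2) :=
  stmt_7_general d α hα hαsum y p hy hp
end

section
/- Let d₂ ≥ 1, p > 0, r ∈ ℝ_{++}^{d₂}, φ(r) = ∏_i r_i^{2/d₂}, and suppose p² < d₂² φ(r) (interior dual radial geometric mean cone with equal powers). Then ŷ := -1/p + d₂(p + √(φ(r)(d₂² φ(r)/p² + d₂² - 1)))/(d₂² φ(r) - p²) is positive and satisfies φ(r)(2ŷ/p + ŷ²)(2ŷ/p)² = ((2/d₂)(2ŷ/p + ŷ²) + (1 - 1/d₂)(2ŷ/p))^{d₂·(2/d₂)}, i.e., it solves the equal-powers root equation h(ŷ) = 0. -/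
/-!
Write `n = d₂`. The base of the right-hand side is `(2y / (n p)) (p y + n + 1)`, so the root equation
reduces to `n² φ (y² + 2y/p) = (p y + n + 1)²`. Substituting `w = p y + 1` and `a = n² φ / p² > 1`
turns this into the quadratic `a (w² - 1) = (w + n)²`, and `p ŷ + 1` is its root
`(n + √(a (a + n² - 1))) / (a - 1)`, which exceeds `1` since `a (a + n² - 1) > (a - 1)²`.
-/

noncomputable def shiftedRoot (a n : ℝ) : ℝ := (n + √(a * (a + n ^ 2 - 1))) / (a - 1)

lemma shiftedRoot_spec {a : ℝ} (ha : 1 < a) (n : ℝ) :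
    a * (shiftedRoot a n ^ 2 - 1) = (shiftedRoot a n + n) ^ 2 := by
  have hs : √(a * (a + n ^ 2 - 1)) ^ 2 = a * (a + n ^ 2 - 1) :=
    Real.sq_sqrt (by nlinarith [sq_nonneg n])
  have ha' : a - 1 ≠ 0 := by linarith
  unfold shiftedRoot
  field_simp
  linear_combination (a - 1) * hs

lemma one_lt_shiftedRoot {a n : ℝ} (ha : 1 < a) (hn : 0 ≤ n) : 1 < shiftedRoot a n := by
  have hs : a - 1 < √(a * (a + n ^ 2 - 1)) :=
    (Real.lt_sqrt (by linarith)).2 (by nlinarith [sq_nonneg n])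
  unfold shiftedRoot
  rw [one_lt_div (by linarith)]
  linarith

lemma root_equation_of_sq_eq {n p φ y : ℝ} (hn : n ≠ 0) (hp : p ≠ 0)
    (h : n ^ 2 * φ * (y ^ 2 + 2 * y / p) = (p * y + n + 1) ^ 2) :
    φ * (2 * y / p + y ^ 2) * (2 * y / p) ^ 2
      = ((2 / n) * (2 * y / p + y ^ 2) + (1 - 1 / n) * (2 * y / p)) ^ 2 := by
  have hlin : (2 / n) * (2 * y / p + y ^ 2) + (1 - 1 / n) * (2 * y / p)
      = 2 * y / (n * p) * (p * y + n + 1) := by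
    field_simp
    ring
  rw [hlin, mul_pow, ← h]
  field_simp
  ring

theorem stmt_8_general (d₂ : ℕ) (p : ℝ) (r : Fin d₂ → ℝ)
    (hp : 0 < p)
    (hdual : p ^ 2 < (d₂ : ℝ) ^ 2 * ∏ i, (r i) ^ ((2 : ℝ) / d₂)) :
    let φ := ∏ i, (r i) ^ ((2 : ℝ) / d₂)
    let yhat := -1 / p +
      (d₂ : ℝ) * (p + Real.sqrt (φ * ((d₂ : ℝ) ^ 2 * φ / p ^ 2 + (d₂ : ℝ) ^ 2 - 1))) /
        ((d₂ : ℝ) ^ 2 * φ - p ^ 2)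
    0 < yhat ∧
    φ * (2 * yhat / p + yhat ^ 2) * (2 * yhat / p) ^ 2
      = ((2 / (d₂ : ℝ)) * (2 * yhat / p + yhat ^ 2)
          + (1 - 1 / (d₂ : ℝ)) * (2 * yhat / p)) ^ ((d₂ : ℝ) * (2 / (d₂ : ℝ))) := by
  set n : ℝ := (d₂ : ℝ)
  intro φ yhat
  have hn : 0 ≤ n := Nat.cast_nonneg d₂
  have hn0 : n ≠ 0 := by rintro h; rw [h] at hdual; nlinarith
  have ha : 1 < n ^ 2 * φ / p ^ 2 := (one_lt_div (by positivity)).2 hdual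
  have hdisc : √(n ^ 2 * φ / p ^ 2 * (n ^ 2 * φ / p ^ 2 + n ^ 2 - 1))
      = n / p * √(φ * (n ^ 2 * φ / p ^ 2 + n ^ 2 - 1)) := by
    rw [← Real.sqrt_sq (div_nonneg hn hp.le), ← Real.sqrt_mul (sq_nonneg _), div_pow,
      mul_div_right_comm, mul_assoc]
  have hw : shiftedRoot (n ^ 2 * φ / p ^ 2) n = p * yhat + 1 := by
    have : n ^ 2 * φ - p ^ 2 ≠ 0 := by linarith
    simp only [shiftedRoot, hdisc, yhat]
    field_simp
    ring
  have hroot := shiftedRoot_spec ha n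
  have hgt := one_lt_shiftedRoot ha hn
  rw [hw] at hroot hgt
  refine ⟨by nlinarith, ?_⟩
  rw [show n * (2 / n) = 2 by field_simp, Real.rpow_two]
  refine root_equation_of_sq_eq hn0 hp.ne' ?_
  have hshift : n ^ 2 * φ * (yhat ^ 2 + 2 * yhat / p)
      = n ^ 2 * φ / p ^ 2 * ((p * yhat + 1) ^ 2 - 1) := by
    field_simp
    ring
  linear_combination hshift + hroot

theorem stmt_8 (d₂ : ℕ) (hd : 1 ≤ d₂) (p : ℝ) (r : Fin d₂ → ℝ)
    (hp : 0 < p) (hr : ∀ i, 0 < r i)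
    (hdual : p ^ 2 < (d₂ : ℝ) ^ 2 * ∏ i, (r i) ^ ((2 : ℝ) / d₂)) :
    let φ := ∏ i, (r i) ^ ((2 : ℝ) / d₂)
    let yhat := -1 / p +
      (d₂ : ℝ) * (p + Real.sqrt (φ * ((d₂ : ℝ) ^ 2 * φ / p ^ 2 + (d₂ : ℝ) ^ 2 - 1))) /
        ((d₂ : ℝ) ^ 2 * φ - p ^ 2)
    0 < yhat ∧
    φ * (2 * yhat / p + yhat ^ 2) * (2 * yhat / p) ^ 2
      = ((2 / (d₂ : ℝ)) * (2 * yhat / p + yhat ^ 2)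
          + (1 - 1 / (d₂ : ℝ)) * (2 * yhat / p)) ^ ((d₂ : ℝ) * (2 / (d₂ : ℝ))) :=
  stmt_8_general d₂ p r hp hdual
end

section
/- Let d ≥ 1 and let f(u,v,w) = -log(v ∑_i log(w_i/v) - u) - log v - ∑_i log w_i on the interior of the logarithm cone {(u,v,w) : v > 0, w > 0, u < v ∑_i log(w_i/v)}. Given (p,q,r) with p < 0, r > 0, and q > p ∑_i log(-r_i/p) + pd, define ω̄ = d·ω((1/d)(1 + d - q/p + ∑_i log(-r_i/p)) - log d) where ω is the real Wright omega function, and set g*_p = (-d - 2 + q/p + 2ω̄)/(p(1 - ω̄)), g*_q = -1/(p(1 - ω̄)), g*_{r_i} = ω̄/(r_i(1 - ω̄)). Then (-g*_p, -g*_q, -g*_r) lies in the interior of the logarithm cone and the negative gradient of f there equals (p, q, r). -/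
/-!
Both `ω̄` and the point `(u, v, w)` are explicit, so everything reduces to one identity: `ω̄` solves
`x + d log x = 1 + d - q/p + ∑ᵢ log(-rᵢ/p)` (which follows from `ω + log ω = id`). Since `x + d log x`
is increasing and equals `1` at `x = 1`, the hypothesis on `q` gives `ω̄ > 1`, which makes `v` and `w`
positive. The identity then gives `∑ᵢ log(wᵢ/v) = 1 + d - q/p - ω̄`, hence `ζ = -1/p > 0`, and the
three gradient components are read off directly.
-/

open Real Finset

lemma one_lt_of_one_lt_add_mul_log {d x : ℝ} (hd : 0 ≤ d) (hx : 0 ≤ x) (h : 1 < x + d * log x) :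
    1 < x := by
  by_contra! hx1
  nlinarith [log_nonpos hx hx1]

lemma mul_add_mul_log_mul_of_add_log_eq {d b c : ℝ} (hd : 0 < d) (hb : 0 < b)
    (hbeq : b + log b = 1 / d * c - log d) : d * b + d * log (d * b) = c := by
  have hc : d * (1 / d * c) = c := by field_simp
  rw [log_mul hd.ne' hb.ne']
  linear_combination d * hbeq + hc

section LogCone

variable {d : ℕ} {p W : ℝ} {r : Fin d → ℝ}

lemma log_w_div_v_eq (hp : p < 0) {ri : ℝ} (hri : 0 < ri) (hW : 1 < W) :
    log (W / (ri * (W - 1)) / (1 / (p * (1 - W)))) = log W - log (-ri / p) := by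
  have hquot : W / (ri * (W - 1)) / (1 / (p * (1 - W))) = W / (-ri / p) := by
    field_simp [(show 1 - W ≠ 0 by linarith), (show W - 1 ≠ 0 by linarith), hp.ne]
    ring
  rw [hquot, log_div (by linarith) (div_pos_of_neg_of_neg (by linarith) hp).ne']

theorem logCone_neg_grad_eq (q : ℝ) (hp : p < 0) (hr : ∀ i, 0 < r i) (hW : 1 < W)
    (hWeq : W + d * log W = 1 + d - q / p + ∑ i, log (-(r i) / p)) :
    let gp := (-(d : ℝ) - 2 + q / p + 2 * W) / (p * (1 - W))
    let gq := -1 / (p * (1 - W))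
    let gr : Fin d → ℝ := fun i => W / (r i * (1 - W))
    let u := -gp
    let v := -gq
    let w : Fin d → ℝ := fun i => -gr i
    let ζ := v * ∑ i, log (w i / v) - u
    (0 < v ∧ (∀ i, 0 < w i) ∧ u < v * ∑ i, log (w i / v)) ∧
    -(1 / ζ) = p ∧
    -(-(∑ i, log (w i / v) - d) / ζ - 1 / v) = q ∧
    (∀ i, -(-v / (w i * ζ) - 1 / (w i)) = r i) := by
  intro gp gq gr u v w ζ
  have h1W : 1 - W ≠ 0 := by linarith
  have hW1 : W - 1 ≠ 0 := by linarith
  have hv : v = 1 / (p * (1 - W)) := by simp only [v, gq]; ring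
  have hw : ∀ i, w i = W / (r i * (W - 1)) := fun i => by
    simp only [w, gr]
    field_simp [(hr i).ne']
    ring
  have hsum : ∑ i, log (w i / v) = 1 + d - q / p - W := by
    simp only [hw, hv, log_w_div_v_eq hp (hr _) hW, sum_sub_distrib, sum_const,
      card_univ, Fintype.card_fin, nsmul_eq_mul]
    linarith
  have hζ : ζ = -1 / p := by
    change v * ∑ i, log (w i / v) - u = _
    rw [hsum, hv]
    simp only [u, gp]
    field_simp
    ring
  have hζpos : 0 < ζ := by rw [hζ]; exact div_pos_of_neg_of_neg (by norm_num) hp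
  refine ⟨⟨?_, fun i => ?_, by linarith⟩, ?_, ?_, fun i => ?_⟩
  · rw [hv]; exact div_pos one_pos (mul_pos_of_neg_of_neg hp (by linarith))
  · rw [hw i]; exact div_pos (by linarith) (mul_pos (hr i) (by linarith))
  · rw [hζ]; field_simp
  · rw [hsum, hζ, hv]
    field_simp [hp.ne]
    ring
  · rw [hw i, hζ, hv]
    field_simp [(hr i).ne', hp.ne]
    ring

end LogCone

theorem stmt_11 (d : ℕ) (hd : 1 ≤ d) (ω : ℝ → ℝ)
    (hωpos : ∀ β : ℝ, 0 < ω β) (hωeq : ∀ β : ℝ, ω β + Real.log (ω β) = β)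
    (p q : ℝ) (r : Fin d → ℝ) (hp : p < 0) (hr : ∀ i, 0 < r i)
    (hq : p * ∑ i, Real.log (-(r i) / p) + p * d < q) :
    let ωb := (d : ℝ) * ω ((1 / d) * (1 + d - q / p + ∑ i, Real.log (-(r i) / p)) - Real.log d)
    let gp := (-(d : ℝ) - 2 + q / p + 2 * ωb) / (p * (1 - ωb))
    let gq := -1 / (p * (1 - ωb))
    let gr : Fin d → ℝ := fun i => ωb / (r i * (1 - ωb))
    let u := -gp
    let v := -gq
    let w : Fin d → ℝ := fun i => -gr i
    let ζ := v * ∑ i, Real.log (w i / v) - u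
    (0 < v ∧ (∀ i, 0 < w i) ∧ u < v * ∑ i, Real.log (w i / v)) ∧
    -(1 / ζ) = p ∧
    -(-(∑ i, Real.log (w i / v) - d) / ζ - 1 / v) = q ∧
    (∀ i, -(-v / (w i * ζ) - 1 / (w i)) = r i) := by
  intro ωb
  have hdpos : (0 : ℝ) < d := by exact_mod_cast hd
  have hqp : q / p < ∑ i, log (-(r i) / p) + d := by
    rw [div_lt_iff_of_neg hp]
    linarith
  have hωb : ωb + d * log ωb = 1 + d - q / p + ∑ i, log (-(r i) / p) :=
    mul_add_mul_log_mul_of_add_log_eq hdpos (hωpos _) (hωeq _)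
  have hωb_pos : 0 < ωb := mul_pos hdpos (hωpos _)
  exact logCone_neg_grad_eq q hp hr
    (one_lt_of_one_lt_add_mul_log hdpos.le hωb_pos.le (by linarith)) hωb
end

section
/- Let d ≥ 1, α ∈ ℝ^d with α_i > 0 and ∑ α_i = 1, φ(w) = ∏_i w_i^{α_i}. Let p < 0, r ∈ ℝ_{++}^d with -p < ∏_i (r_i/α_i)^{α_i}, and let ŷ > max_i(p α_i) satisfy ∑_i α_i log(ŷ - p α_i) = log φ(r). Define g*_p = -1/p - 1/ŷ and g*_{r_i} = (p α_i/ŷ - 1)/r_i. Then (-g*_p, -g*_r) lies in the interior of the hypograph power cone (i.e., -g*_r > 0 and -g*_p < φ(-g*_r)), φ(-g*_r) = 1/ŷ, and the negative gradient of the barrier f(u,w) = -log(φ(w) - u) - ∑_i log w_i at (-g*_p, -g*_r) equals (p, r). -/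
/-!
The root `ŷ` is positive: for `ŷ ≤ 0` each `ŷ - p αᵢ` is at most `-p αᵢ`, so by homogeneity of
`φ` the weighted geometric mean `φ(ŷ - p α)` is at most `-p φ(α) < φ(r)`, contradicting the root
equation `φ(ŷ - p α) = φ(r)`. Then `-g*_r = ŷ⁻¹ (ŷ - p α) / r`, and homogeneity and
multiplicativity of `φ` give `φ(-g*_r) = ŷ⁻¹ φ(ŷ - p α) / φ(r) = 1 / ŷ`; with this value the
barrier gradient identities are rational-function algebra.
-/

open Finset Real

section WeightedGeomMean

variable {ι : Type*} [Fintype ι] {α : ι → ℝ}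

lemma log_prod_rpow {x : ι → ℝ} (hx : ∀ i, 0 < x i) :
    log (∏ i, x i ^ α i) = ∑ i, α i * log (x i) := by
  rw [log_prod fun i _ => (rpow_pos_of_pos (hx i) _).ne']
  simp only [log_rpow (hx _)]

lemma prod_rpow_eq_of_sum_mul_log_eq {x y : ι → ℝ} (hx : ∀ i, 0 < x i) (hy : ∀ i, 0 < y i)
    (h : ∑ i, α i * log (x i) = log (∏ i, y i ^ α i)) :
    ∏ i, x i ^ α i = ∏ i, y i ^ α i := by
  rw [← log_prod_rpow hx] at h
  exact log_injOn_pos (prod_pos fun i _ => rpow_pos_of_pos (hx i) _)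
    (prod_pos fun i _ => rpow_pos_of_pos (hy i) _) h

lemma prod_div_rpow {x y : ι → ℝ} (hx : ∀ i, 0 ≤ x i) (hy : ∀ i, 0 ≤ y i) :
    ∏ i, (x i / y i) ^ α i = (∏ i, x i ^ α i) / ∏ i, y i ^ α i := by
  simp only [div_rpow (hx _) (hy _), prod_div_distrib]

lemma prod_const_mul_rpow (hα : ∑ i, α i = 1) {c : ℝ} (hc : 0 < c) {x : ι → ℝ}
    (hx : ∀ i, 0 ≤ x i) :
    ∏ i, (c * x i) ^ α i = c * ∏ i, x i ^ α i := by
  simp only [mul_rpow hc.le (hx _), prod_mul_distrib]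
  rw [← rpow_sum_of_pos hc, hα, rpow_one]

lemma prod_rpow_le_prod_rpow (hα : ∀ i, 0 ≤ α i) {x y : ι → ℝ} (hx : ∀ i, 0 ≤ x i)
    (hxy : ∀ i, x i ≤ y i) :
    ∏ i, x i ^ α i ≤ ∏ i, y i ^ α i :=
  prod_le_prod (fun i _ => rpow_nonneg (hx i) _) fun i _ => rpow_le_rpow (hx i) (hxy i) (hα i)

lemma pos_of_prod_rpow_sub_mul_eq (hα : ∀ i, 0 < α i) (hαsum : ∑ i, α i = 1) {p : ℝ}
    (hp : p < 0) {r : ι → ℝ} (hr : ∀ i, 0 < r i) (hdual : -p < ∏ i, (r i / α i) ^ α i)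
    {y : ℝ} (hymax : ∀ i, p * α i < y) (hroot : ∏ i, (y - p * α i) ^ α i = ∏ i, r i ^ α i) :
    0 < y := by
  by_contra! hy
  have hle : ∏ i, (y - p * α i) ^ α i ≤ -p * ∏ i, α i ^ α i := by
    rw [← prod_const_mul_rpow hαsum (neg_pos.2 hp) fun i => (hα i).le]
    exact prod_rpow_le_prod_rpow (fun i => (hα i).le) (fun i => (sub_pos.2 (hymax i)).le)
      fun i => by linarith
  rw [prod_div_rpow (fun i => (hr i).le) (fun i => (hα i).le),
    lt_div_iff₀ (prod_pos fun i _ => rpow_pos_of_pos (hα i) _)] at hdual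
  linarith

end WeightedGeomMean

theorem stmt_12_general (d : ℕ) (α : Fin d → ℝ)
    (hα : ∀ i, 0 < α i) (hαsum : ∑ i, α i = 1)
    (p : ℝ) (r : Fin d → ℝ) (hp : p < 0) (hr : ∀ i, 0 < r i)
    (hdual : -p < ∏ i, (r i / α i) ^ (α i))
    (yhat : ℝ) (hymax : ∀ i, p * α i < yhat)
    (hroot : ∑ i, α i * Real.log (yhat - p * α i) = Real.log (∏ i, (r i) ^ (α i))) :
    let gp := -1 / p - 1 / yhat
    let gr : Fin d → ℝ := fun i => (p * α i / yhat - 1) / r i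
    let u := -gp
    let w : Fin d → ℝ := fun i => -gr i
    let φw := ∏ i, (w i) ^ (α i)
    (∀ i, 0 < w i) ∧ u < φw ∧ φw = 1 / yhat ∧
    -(1 / (φw - u)) = p ∧
    (∀ i, -(-φw * α i / (w i * (φw - u)) - 1 / (w i)) = r i) := by
  intro gp gr u w φw
  have hsub : ∀ i, 0 < yhat - p * α i := fun i => sub_pos.2 (hymax i)
  have hprod := prod_rpow_eq_of_sum_mul_log_eq hsub hr hroot
  have hy : 0 < yhat := pos_of_prod_rpow_sub_mul_eq hα hαsum hp hr hdual hymax hprod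
  have hw : ∀ i, w i = yhat⁻¹ * ((yhat - p * α i) / r i) := fun i => by
    simp only [w, gr]
    field_simp
    ring
  have hwpos : ∀ i, 0 < w i := fun i => by
    rw [hw i]
    exact mul_pos (inv_pos.2 hy) (div_pos (hsub i) (hr i))
  have hφw : φw = 1 / yhat := by
    simp only [φw, hw,
      prod_const_mul_rpow hαsum (inv_pos.2 hy) fun i => (div_pos (hsub i) (hr i)).le,
      prod_div_rpow (fun i => (hsub i).le) (fun i => (hr i).le), hprod,
      div_self (prod_pos fun i _ => rpow_pos_of_pos (hr i) _).ne', mul_one, one_div]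
  have hgap : φw - u = -1 / p := by
    simp only [hφw, u, gp]
    ring
  refine ⟨hwpos, ?_, hφw, by rw [hgap]; field_simp, fun i => ?_⟩
  · rw [← sub_pos, hgap]
    exact div_pos_of_neg_of_neg (by norm_num) hp
  · -- in the orientation `field_simp` normalises the denominator to
    have : yhat - α i * p ≠ 0 := by linarith [hsub i]
    rw [hgap, hφw, hw i]
    field_simp
    ring

theorem stmt_12 (d : ℕ) (hd : 1 ≤ d) (α : Fin d → ℝ)
    (hα : ∀ i, 0 < α i) (hαsum : ∑ i, α i = 1)
    (p : ℝ) (r : Fin d → ℝ) (hp : p < 0) (hr : ∀ i, 0 < r i)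
    (hdual : -p < ∏ i, (r i / α i) ^ (α i))
    (yhat : ℝ) (hymax : ∀ i, p * α i < yhat)
    (hroot : ∑ i, α i * Real.log (yhat - p * α i) = Real.log (∏ i, (r i) ^ (α i))) :
    let gp := -1 / p - 1 / yhat
    let gr : Fin d → ℝ := fun i => (p * α i / yhat - 1) / r i
    let u := -gp
    let w : Fin d → ℝ := fun i => -gr i
    let φw := ∏ i, (w i) ^ (α i)
    (∀ i, 0 < w i) ∧ u < φw ∧ φw = 1 / yhat ∧
    -(1 / (φw - u)) = p ∧
    (∀ i, -(-φw * α i / (w i * (φw - u)) - 1 / (w i)) = r i) :=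
  stmt_12_general d α hα hαsum p r hp hr hdual yhat hymax hroot
end

section
/- Let d ≥ 1 and (u,w) ∈ ℝ × ℝ^d with u > ‖w‖_∞, and let (p, r) = -g(u,w) where g is the gradient of f(u,w) = -∑_i log(u² - w_i²) + (d-1) log u. Then p > ‖r‖_1, i.e., the negative gradient maps the interior of the infinity norm cone into the interior of the epigraph of the ℓ1 norm. -/
/-!
Per coordinate, `2u/(u² - wᵢ²) - 2|wᵢ|/(u² - wᵢ²) = 2/(u + |wᵢ|) ≥ 1/u` because `|wᵢ| < u`.
Summing over the `d` coordinates gives `∑ 2u/(u² - wᵢ²) - ‖r‖₁ ≥ d/u > (d - 1)/u`.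
-/

open Finset

lemma inv_add_two_mul_abs_div_le {a u : ℝ} (h : |a| < u) :
    u⁻¹ + 2 * |a| / (u ^ 2 - a ^ 2) ≤ 2 * u / (u ^ 2 - a ^ 2) := by
  have hu : 0 < u := (abs_nonneg a).trans_lt h
  have hsum : 0 < u + |a| := by positivity
  have hfactor : u ^ 2 - a ^ 2 = (u - |a|) * (u + |a|) := by rw [← sq_abs a]; ring
  have hdiff : 2 * u / (u ^ 2 - a ^ 2) - 2 * |a| / (u ^ 2 - a ^ 2) = 2 / (u + |a|) := by
    have hgap : u - |a| ≠ 0 := (sub_pos.2 h).ne'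
    rw [hfactor]
    field_simp
  have hinv : u⁻¹ ≤ 2 / (u + |a|) := by
    rw [inv_eq_one_div, div_le_div_iff₀ hu hsum]
    linarith
  linarith

lemma card_div_add_sum_two_mul_abs_div_le {ι : Type*} [Fintype ι] {u : ℝ} {w : ι → ℝ}
    (h : ∀ i, |w i| < u) :
    Fintype.card ι / u + ∑ i, 2 * |w i| / (u ^ 2 - w i ^ 2) ≤ ∑ i, 2 * u / (u ^ 2 - w i ^ 2) := by
  calc Fintype.card ι / u + ∑ i, 2 * |w i| / (u ^ 2 - w i ^ 2)
      = ∑ i, (u⁻¹ + 2 * |w i| / (u ^ 2 - w i ^ 2)) := by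
        rw [sum_add_distrib, sum_const, card_univ, nsmul_eq_mul, div_eq_mul_inv]
    _ ≤ ∑ i, 2 * u / (u ^ 2 - w i ^ 2) :=
        sum_le_sum fun i _ => inv_add_two_mul_abs_div_le (h i)

theorem stmt_14 (d : ℕ) (hd : 1 ≤ d) (u : ℝ) (w : Fin d → ℝ)
    (hint : ∀ i, |w i| < u) :
    let p := -(((d : ℝ) - 1) / u - ∑ i, 2 * u / (u ^ 2 - (w i) ^ 2))
    let r : Fin d → ℝ := fun i => -(2 * w i / (u ^ 2 - (w i) ^ 2))
    ∑ i, |r i| < p := by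
  intro p r
  have hu : 0 < u := (abs_nonneg _).trans_lt (hint ⟨0, hd⟩)
  have habs : ∀ i, |r i| = 2 * |w i| / (u ^ 2 - w i ^ 2) := fun i => by
    have hD : 0 < u ^ 2 - w i ^ 2 := by
      rw [← sq_abs (w i)]; nlinarith [abs_nonneg (w i), hint i]
    simp only [r, abs_neg, abs_div, abs_mul, abs_two, abs_of_pos hD]
  have hsum := card_div_add_sum_two_mul_abs_div_le hint
  rw [Fintype.card_fin] at hsum
  have hlt : ((d : ℝ) - 1) / u < d / u := div_lt_div_of_pos_right (by linarith) hu
  simp only [p, habs]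
  linarith
end

section
/- Let d ≥ 1, v > 0, w ∈ ℝ_{++}^d, u < v ∑_i log(w_i/v), and ζ = v ∑_i log(w_i/v) - u. Define p = -1/ζ, q = (∑_i log(w_i/v) - d)/ζ + 1/v, r_i = v/(w_i ζ) + 1/w_i. Then p < 0, r > 0, and q > p ∑_i log(-r_i/p) + p d; i.e., the negative gradient of the logarithm cone barrier maps the cone's interior into the interior of the dual cone. -/
/-!
With `ζ > 0`, every coordinate of the candidate dual point simplifies: `-r_i / p = (v + ζ) / w_i`.
Hence `log (w_i / v) + log (-r_i / p) = log ((v + ζ) / v)` is independent of `i`, and the slack of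
the dual-cone inequality collapses to `d · log (1 + ζ / v) / ζ + 1 / v`, which is positive.
-/

open Finset Real

lemma neg_div_neg_inv_eq {v ζ w : ℝ} (hζ : ζ ≠ 0) (hw : w ≠ 0) :
    -(v / (w * ζ) + 1 / w) / (-1 / ζ) = (v + ζ) / w := by
  field_simp

lemma log_div_add_log_div_cancel {a b c : ℝ} (ha : 0 < a) (hb : 0 < b) (hc : 0 < c) :
    log (b / a) + log (c / b) = log (c / a) := by
  rw [← log_mul (div_pos hb ha).ne' (div_pos hc hb).ne']
  congr 1
  field_simp

section

variable {ι : Type*} [Fintype ι] {v ζ : ℝ} {w : ι → ℝ}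

lemma logCone_dual_slack_eq (hv : 0 < v) (hζ : 0 < ζ) (hw : ∀ i, 0 < w i) :
    (∑ i, log (w i / v) - Fintype.card ι) / ζ + 1 / v
        - ((-1 / ζ) * ∑ i, log (-(v / (w i * ζ) + 1 / w i) / (-1 / ζ))
          + (-1 / ζ) * Fintype.card ι)
      = Fintype.card ι * log ((v + ζ) / v) / ζ + 1 / v := by
  have hcoord : ∀ i, log (w i / v) + log (-(v / (w i * ζ) + 1 / w i) / (-1 / ζ))
      = log ((v + ζ) / v) := fun i => by
    rw [neg_div_neg_inv_eq hζ.ne' (hw i).ne']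
    exact log_div_add_log_div_cancel hv (hw i) (by linarith)
  have hsum : ∑ i, log (w i / v) + ∑ i, log (-(v / (w i * ζ) + 1 / w i) / (-1 / ζ))
      = Fintype.card ι * log ((v + ζ) / v) := by
    rw [← sum_add_distrib, Fintype.sum_congr _ _ hcoord, sum_const, card_univ, nsmul_eq_mul]
  rw [← hsum]
  field_simp
  ring

theorem logCone_negGrad_mem_dual_interior (hv : 0 < v) (hζ : 0 < ζ) (hw : ∀ i, 0 < w i) :
    -1 / ζ < 0 ∧ (∀ i, 0 < v / (w i * ζ) + 1 / w i) ∧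
      (-1 / ζ) * ∑ i, log (-(v / (w i * ζ) + 1 / w i) / (-1 / ζ)) + (-1 / ζ) * Fintype.card ι
        < (∑ i, log (w i / v) - Fintype.card ι) / ζ + 1 / v := by
  refine ⟨div_neg_of_neg_of_pos (by norm_num) hζ,
    fun i => by have := hw i; positivity, sub_pos.mp ?_⟩
  rw [logCone_dual_slack_eq hv hζ hw]
  have hlog : 0 ≤ log ((v + ζ) / v) :=
    log_nonneg ((one_le_div hv).mpr (by linarith))
  positivity

end

theorem stmt_15_general (d : ℕ) (u v : ℝ) (w : Fin d → ℝ)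
    (hv : 0 < v) (hw : ∀ i, 0 < w i)
    (hu : u < v * ∑ i, Real.log (w i / v)) :
    let ζ := v * ∑ i, Real.log (w i / v) - u
    let p := -1 / ζ
    let q := (∑ i, Real.log (w i / v) - d) / ζ + 1 / v
    let r : Fin d → ℝ := fun i => v / (w i * ζ) + 1 / (w i)
    p < 0 ∧ (∀ i, 0 < r i) ∧ p * ∑ i, Real.log (-(r i) / p) + p * d < q := by
  intro ζ p q r
  have h := logCone_negGrad_mem_dual_interior hv (sub_pos.mpr hu) hw
  rwa [Fintype.card_fin] at h

theorem stmt_15 (d : ℕ) (hd : 1 ≤ d) (u v : ℝ) (w : Fin d → ℝ)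
    (hv : 0 < v) (hw : ∀ i, 0 < w i)
    (hu : u < v * ∑ i, Real.log (w i / v)) :
    let ζ := v * ∑ i, Real.log (w i / v) - u
    let p := -1 / ζ
    let q := (∑ i, Real.log (w i / v) - d) / ζ + 1 / v
    let r : Fin d → ℝ := fun i => v / (w i * ζ) + 1 / (w i)
    p < 0 ∧ (∀ i, 0 < r i) ∧ p * ∑ i, Real.log (-(r i) / p) + p * d < q :=
  stmt_15_general d u v w hv hw hu
end
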